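/- Let (R, m) be a Cohen-Macaulay local ring of dimension one whose integral closure R̄ in the total quotient ring Q(R) is a discrete valuation ring with maximal ideal n, such that R̄ is a finitely generated R-module and the natural map R/m → R̄/n is an isomorphism. Let I be a regular ideal of R, let a, b be non-zerodivisors of R with α := a/b ∈ R:I. Then ℓ_R(R/αI) = ℓ_R(R/I) + v(α), where v is the normalized valuation associated to R̄. -/

import Mathlib

set_option synthInstance.maxHeartbeats 1000000

/-!
As ideals of `R`, `bJ = aI`, and since `a, b` are non-zerodivisors,
`ℓ(R/bJ) = ℓ(R/J) + ℓ(R/bR)` and `ℓ(R/aI) = ℓ(R/I) + ℓ(R/aR)`. It remains to see that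
`ℓ_R(R/xR) = ℓ_R̄(R̄/xR̄)` for `x ≠ 0`. Computing `ℓ_R(R̄/xR)` along `xR ⊆ R ⊆ R̄` and along
`xR ⊆ xR̄ ⊆ R̄` gives `ℓ_R(R/xR) + ℓ_R(R̄/R) = ℓ_R(R̄/R) + ℓ_R(R̄/xR̄)`; the conductor contains a
nonzero `d`, so `ℓ_R(R̄/R) ≤ ℓ_R(R̄/dR̄) < ∞` can be cancelled. Finally `ℓ_R = ℓ_R̄` on `R̄`-modules
because the residue fields agree.
-/

/-- Supremum of lengths of strictly increasing finite chains in a preorder. -/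
noncomputable def chainLen (α : Type*) [Preorder α] : ℕ∞ :=
  ⨆ s : RelSeries {(a, b) : α × α | a < b}, (s.length : ℕ∞)

/-- The length of an `R`-module `M`: the longest chain of submodules. -/
noncomputable def modLength (R M : Type*) [CommRing R] [AddCommGroup M] [Module R M] : ℕ∞ :=
  chainLen (Submodule R M)

open Pointwise IsLocalRing

lemma coe_chainLen (α : Type*) [Preorder α] [Nonempty α] :
    (chainLen α : WithBot ℕ∞) = Order.krullDim α := by
  rw [chainLen, Order.krullDim, WithBot.coe_iSup (OrderTop.bddAbove _)]
  rfl

lemma modLength_eq_length (R M : Type*) [CommRing R] [AddCommGroup M] [Module R M] :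
    modLength R M = Module.length R M :=
  WithBot.coe_injective <| by rw [Module.coe_length, modLength, coe_chainLen]

namespace Module

variable {R M X : Type*} [CommRing R] [AddCommGroup M] [Module R M] [AddCommGroup X] [Module R X]

theorem length_quotient_map_of_injective {g : X →ₗ[R] M} (hg : Function.Injective g)
    (U : Submodule R X) :
    length R (M ⧸ U.map g) = length R (X ⧸ U) + length R (M ⧸ LinearMap.range g) := by
  refine length_eq_add_of_exact (U.mapQ _ g (Submodule.le_comap_map g U))
    (Submodule.factor LinearMap.map_le_range) ?_ (Submodule.factor_surjective _) ?_
  · rw [← LinearMap.ker_eq_bot, Submodule.ker_mapQ, Submodule.comap_map_eq_of_injective hg,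
      Submodule.mkQ_map_self]
  · rw [LinearMap.exact_iff, Submodule.range_mapQ, Submodule.ker_mapQ, Submodule.comap_id]

theorem length_quotient_smul_top_eq_of_injective {f : X →ₗ[R] M} (hf : Function.Injective f)
    {a : R} (ha : IsSMulRegular M a) (hfin : length R (M ⧸ LinearMap.range f) ≠ ⊤) :
    length R (X ⧸ (a • ⊤ : Submodule R X)) = length R (M ⧸ (a • ⊤ : Submodule R M)) := by
  have hX := length_quotient_map_of_injective hf (a • ⊤)
  have hM : length R (M ⧸ a • LinearMap.range f) =
      length R (M ⧸ LinearMap.range f) + length R (M ⧸ (a • ⊤ : Submodule R M)) := by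
    rw [Submodule.pointwise_smul_def, Submodule.pointwise_smul_def, ← LinearMap.range_eq_map]
    exact length_quotient_map_of_injective (g := DistribSMul.toLinearMap R M a) ha _
  rw [Submodule.map_pointwise_smul, Submodule.map_top, hM, add_comm] at hX
  exact (WithTop.add_right_cancel hfin hX).symm

end Module

theorem Algebra.smul_top_eq_restrictScalars_span {A B : Type*} [CommRing A] [CommRing B]
    [Algebra A B] (a : A) :
    (a • ⊤ : Submodule A B) = (Ideal.span {algebraMap A B a}).restrictScalars A := by
  ext x
  simp [Submodule.mem_smul_pointwise_iff_exists, Ideal.mem_span_singleton', Algebra.smul_def,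
    mul_comm]

theorem Ideal.smul_top_eq_span_singleton {R : Type*} [CommRing R] (a : R) :
    (a • ⊤ : Ideal R) = Ideal.span {a} := by
  simpa using Algebra.smul_top_eq_restrictScalars_span (B := R) a

theorem Ideal.length_quotient_smul {R : Type*} [CommRing R] {b : R} (hb : b ∈ nonZeroDivisors R)
    (J : Ideal R) :
    Module.length R (R ⧸ b • J) = Module.length R (R ⧸ J) + Ring.ord R b :=
  Module.length_eq_add_of_exact _ _ (J.mulQuot_injective hb) J.quotOfMul_surjective
    J.exact_mulQuot_quotOfMul

theorem Subalgebra.exists_smul_top_le_range {R K : Type*} [CommRing R] [CommRing K] [Algebra R K]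
    [IsLocalization (nonZeroDivisors R) K] (S : Subalgebra R K) [Module.Finite R S] :
    ∃ d ∈ nonZeroDivisors R,
      d • (⊤ : Submodule R S) ≤ LinearMap.range (Algebra.linearMap R S) := by
  obtain ⟨d, hd, hint⟩ := FractionalIdeal.isFractional_of_fg (S := nonZeroDivisors R)
    ((Module.Finite.iff_fg (N := Subalgebra.toSubmodule S)).mp ‹Module.Finite R S›)
  refine ⟨d, hd, fun _ hx => ?_⟩
  obtain ⟨s, -, rfl⟩ := (Submodule.mem_smul_pointwise_iff_exists _ _ _).mp hx
  obtain ⟨r, hr⟩ := hint s s.2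
  exact ⟨r, Subtype.ext (by simpa [Algebra.smul_def] using hr)⟩

section LocalExtension

variable {A B : Type*} [CommRing A] [CommRing B] [IsLocalRing A] [IsLocalRing B] [Algebra A B]
  [IsLocalHom (algebraMap A B)]

theorem IsLocalRing.length_restrictScalars_eq
    (hres : Function.Surjective (algebraMap (ResidueField A) (ResidueField B)))
    (M : Type*) [AddCommGroup M] [Module A M] [Module B M] [IsScalarTower A B M] :
    Module.length A M = Module.length B M := by
  rw [IsLocalRing.length_restrictScalars A B M, Module.length_eq_of_surjective hres,
    Module.length_eq_one (ResidueField B) (ResidueField B), mul_one]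

theorem IsLocalRing.length_quotient_smul_top_eq_ord
    (hres : Function.Surjective (algebraMap (ResidueField A) (ResidueField B))) (a : A) :
    Module.length A (B ⧸ (a • ⊤ : Submodule A B)) = Ring.ord B (algebraMap A B a) := by
  rw [Algebra.smul_top_eq_restrictScalars_span,
    (Submodule.Quotient.restrictScalarsEquiv A _).length_eq]
  exact IsLocalRing.length_restrictScalars_eq hres _

theorem Ring.ord_algebraMap_eq [IsNoetherianRing B] [Ring.KrullDimLE 1 B]
    (hres : Function.Surjective (algebraMap (ResidueField A) (ResidueField B)))
    (hinj : Function.Injective (algebraMap A B)) {d : A}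
    (hd : algebraMap A B d ∈ nonZeroDivisors B)
    (hcond : d • ⊤ ≤ LinearMap.range (Algebra.linearMap A B)) {a : A}
    (ha : algebraMap A B a ∈ nonZeroDivisors B) :
    Ring.ord A a = Ring.ord B (algebraMap A B a) := by
  have hfin : Module.length A (B ⧸ LinearMap.range (Algebra.linearMap A B)) ≠ ⊤ := by
    refine ne_top_of_le_ne_top ?_
      (Module.length_le_of_surjective _ (Submodule.factor_surjective hcond))
    rw [length_quotient_smul_top_eq_ord hres]
    exact Ring.ord_ne_top hd
  have hreg : IsSMulRegular B a := fun x y h =>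
    (isRegular_iff_mem_nonZeroDivisors.mpr ha).left (by simpa [Algebra.smul_def] using h)
  rw [← length_quotient_smul_top_eq_ord hres,
    ← Module.length_quotient_smul_top_eq_of_injective hinj hreg hfin,
    Ideal.smul_top_eq_span_singleton, Ring.ord]

end LocalExtension

theorem Ideal.smul_eq_smul_of_mem_iff {R K : Type*} [CommRing R] [CommRing K] [Algebra R K]
    [IsFractionRing R K] {I J : Ideal R} {a b : R} (hb : b ∈ nonZeroDivisors R)
    (hcol : ∀ y ∈ I, ∃ r : R,
      algebraMap R K r = IsLocalization.mk' K a ⟨b, hb⟩ * algebraMap R K y)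
    (hJ : ∀ x : R, x ∈ J ↔ ∃ y ∈ I, b * x = a * y) :
    b • J = a • I := by
  ext z
  simp only [Submodule.mem_smul_pointwise_iff_exists, smul_eq_mul]
  constructor
  · rintro ⟨x, hx, rfl⟩
    obtain ⟨y, hy, hxy⟩ := (hJ x).1 hx
    exact ⟨y, hy, hxy.symm⟩
  · rintro ⟨y, hy, rfl⟩
    obtain ⟨r, hr⟩ := hcol y hy
    have hbr : b * r = a * y := IsFractionRing.injective R K <| by
      rw [map_mul, hr, ← mul_assoc, IsLocalization.mk'_spec'_mk, map_mul]
    exact ⟨r, (hJ r).2 ⟨y, hy, hbr⟩, hbr⟩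

theorem stmt12_general (R : Type*) [CommRing R] [IsDomain R] [IsLocalRing R]
    [IsDiscreteValuationRing ↥(integralClosure R (FractionRing R))]
    [Module.Finite R ↥(integralClosure R (FractionRing R))]
    -- the natural map `R/m → R̄/n` is an isomorphism:
    (hres1 : ∀ r : R,
      algebraMap R ↥(integralClosure R (FractionRing R)) r ∈
          IsLocalRing.maximalIdeal ↥(integralClosure R (FractionRing R)) ↔
        r ∈ IsLocalRing.maximalIdeal R)
    (hres2 : ∀ y : ↥(integralClosure R (FractionRing R)), ∃ r : R,
      algebraMap R ↥(integralClosure R (FractionRing R)) r - y ∈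
        IsLocalRing.maximalIdeal ↥(integralClosure R (FractionRing R)))
    (I : Ideal R)
    (a b : R) (ha : a ∈ nonZeroDivisors R) (hb : b ∈ nonZeroDivisors R)
    -- `α = a/b` lies in `R : I`, i.e. `αI ⊆ R`:
    (hcol : ∀ y ∈ I, ∃ r : R,
      algebraMap R (FractionRing R) r =
        IsLocalization.mk' (FractionRing R) a ⟨b, hb⟩ * algebraMap R (FractionRing R) y)
    -- `J` is the ideal `αI = (a/b)I` of `R`:
    (J : Ideal R)
    (hJ : ∀ x : R, x ∈ J ↔ ∃ y ∈ I, b * x = a * y) :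
    modLength R (R ⧸ J) +
        modLength ↥(integralClosure R (FractionRing R))
          (↥(integralClosure R (FractionRing R)) ⧸
            Ideal.span {algebraMap R ↥(integralClosure R (FractionRing R)) b}) =
      modLength R (R ⧸ I) +
        modLength ↥(integralClosure R (FractionRing R))
          (↥(integralClosure R (FractionRing R)) ⧸
            Ideal.span {algebraMap R ↥(integralClosure R (FractionRing R)) a}) := by
  set S := ↥(integralClosure R (FractionRing R))
  have hinj : Function.Injective (algebraMap R S) := fun r r' h =>
    IsFractionRing.injective R (FractionRing R) (congrArg Subtype.val h)
  have : IsLocalHom (algebraMap R S) := ⟨fun r hr => by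
    by_contra hr'
    exact (mem_maximalIdeal _).mp ((hres1 r).mpr ((mem_maximalIdeal _).mpr hr')) hr⟩
  have hres : Function.Surjective (algebraMap (ResidueField R) (ResidueField S)) := by
    intro y
    obtain ⟨y, rfl⟩ := residue_surjective y
    obtain ⟨r, hr⟩ := hres2 y
    refine ⟨residue R r, ?_⟩
    rw [ResidueField.algebraMap_residue, ← sub_eq_zero, ← map_sub, residue_eq_zero_iff]
    exact hr
  have algebraMap_mem {x : R} (hx : x ∈ nonZeroDivisors R) :
      algebraMap R S x ∈ nonZeroDivisors S :=
    mem_nonZeroDivisors_of_ne_zero ((map_ne_zero_iff _ hinj).mpr (nonZeroDivisors.ne_zero hx))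
  obtain ⟨d, hd, hcond⟩ := (integralClosure R (FractionRing R)).exists_smul_top_le_range
  have hord (x : R) (hx : x ∈ nonZeroDivisors R) : Ring.ord R x = Ring.ord S (algebraMap R S x) :=
    Ring.ord_algebraMap_eq hres hinj (algebraMap_mem hd) hcond (algebraMap_mem hx)
  simp only [modLength_eq_length]
  change _ + Ring.ord S _ = _ + Ring.ord S _
  rw [← hord a ha, ← hord b hb, ← Ideal.length_quotient_smul hb, ← Ideal.length_quotient_smul ha,
    Ideal.smul_eq_smul_of_mem_iff hb hcol hJ]

/-- Let `(R, m)` be a one-dimensional Cohen-Macaulay local ring whose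
integral closure `R̄` in `Q(R)` is a DVR with maximal ideal `n`, finitely generated as an
`R`-module, with `R/m ≅ R̄/n`.  Let `I` be a regular ideal, `a, b` non-zerodivisors with
`α = a/b ∈ R : I`.  Then `ℓ_R(R/αI) = ℓ_R(R/I) + v(α)`, i.e. (since
`v(α) = ℓ_{R̄}(R̄/aR̄) − ℓ_{R̄}(R̄/bR̄)`)
`ℓ_R(R/αI) + ℓ_{R̄}(R̄/bR̄) = ℓ_R(R/I) + ℓ_{R̄}(R̄/aR̄)`. -/
theorem stmt12 (R : Type*) [CommRing R] [IsDomain R] [IsNoetherianRing R] [IsLocalRing R]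
    (hdim : ringKrullDim R = 1)
    (hdepth : ∃ x ∈ IsLocalRing.maximalIdeal R, x ∈ nonZeroDivisors R)
    [IsDiscreteValuationRing ↥(integralClosure R (FractionRing R))]
    [Module.Finite R ↥(integralClosure R (FractionRing R))]
    -- the natural map `R/m → R̄/n` is an isomorphism:
    (hres1 : ∀ r : R,
      algebraMap R ↥(integralClosure R (FractionRing R)) r ∈
          IsLocalRing.maximalIdeal ↥(integralClosure R (FractionRing R)) ↔
        r ∈ IsLocalRing.maximalIdeal R)
    (hres2 : ∀ y : ↥(integralClosure R (FractionRing R)), ∃ r : R,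
      algebraMap R ↥(integralClosure R (FractionRing R)) r - y ∈
        IsLocalRing.maximalIdeal ↥(integralClosure R (FractionRing R)))
    (I : Ideal R) (hreg : ∃ x ∈ I, x ∈ nonZeroDivisors R)
    (a b : R) (ha : a ∈ nonZeroDivisors R) (hb : b ∈ nonZeroDivisors R)
    -- `α = a/b` lies in `R : I`, i.e. `αI ⊆ R`:
    (hcol : ∀ y ∈ I, ∃ r : R,
      algebraMap R (FractionRing R) r =
        IsLocalization.mk' (FractionRing R) a ⟨b, hb⟩ * algebraMap R (FractionRing R) y)
    -- `J` is the ideal `αI = (a/b)I` of `R`: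
    (J : Ideal R)
    (hJ : ∀ x : R, x ∈ J ↔ ∃ y ∈ I, b * x = a * y) :
    modLength R (R ⧸ J) +
        modLength ↥(integralClosure R (FractionRing R))
          (↥(integralClosure R (FractionRing R)) ⧸
            Ideal.span {algebraMap R ↥(integralClosure R (FractionRing R)) b}) =
      modLength R (R ⧸ I) +
        modLength ↥(integralClosure R (FractionRing R))
          (↥(integralClosure R (FractionRing R)) ⧸
            Ideal.span {algebraMap R ↥(integralClosure R (FractionRing R)) a}) :=
  stmt12_general R hres1 hres2 I a b ha hb hcol J hJ
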